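/- Let R be a commutative K-algebra and I a nonzero two-sided ideal of the ring D(R) of differential operators on R. Then I₀ := I ∩ R is a nonzero ideal of R which is Der_K(R)-stable (δ(I₀) ⊆ I₀ for all δ ∈ Der_K(R)) and satisfies D(R)·I₀·D(R) ∩ R = I₀. In particular, every nonzero two-sided ideal of D(R) has nonzero intersection with R. -/
import Mathlib


/-- `DO K R i` is the set of differential operators on `R` of order `≤ i`. -/
def DO (K R : Type*) [CommSemiring K] [CommRing R] [Algebra K R] :
    ℕ → Set (Module.End K R)
  | 0 => {u | ∀ r : R, Algebra.lmul K R r * u = u * Algebra.lmul K R r}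
  | i + 1 => {u | ∀ r : R, Algebra.lmul K R r * u - u * Algebra.lmul K R r ∈ DO K R i}

lemma lmul_mem_DO0 {K R : Type*} [CommSemiring K] [CommRing R] [Algebra K R] (r : R) :
    Algebra.lmul K R r ∈ DO K R 0 := by
  intro s
  rw [← map_mul, ← map_mul, mul_comm]

lemma one_mem_DO0 {K R : Type*} [CommSemiring K] [CommRing R] [Algebra K R] :
    (1 : Module.End K R) ∈ DO K R 0 := by
  intro s
  rw [mul_one, one_mul]

/-- Let `R` be a commutative `K`-algebra and `I` a nonzero two-sided ideal of `D(R)`.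
Then `I₀ = I ∩ R` is a nonzero `Der_K(R)`-stable ideal of `R` satisfying
`D(R)·I₀·D(R) ∩ R = I₀`.  In particular every nonzero two-sided ideal of `D(R)` has
nonzero intersection with `R`. -/
theorem ideal_of_differential_operators_meets_R
    {K R : Type*} [Field K] [CommRing R] [Algebra K R]
    (DA : Set (Module.End K R)) (hDA : DA = ⋃ i, DO K R i)
    -- `I` is a nonzero two-sided ideal of `D(R)`:
    (I : Set (Module.End K R)) (h_sub : I ⊆ DA) (h0 : (0 : Module.End K R) ∈ I)
    (hadd : ∀ x ∈ I, ∀ y ∈ I, x + y ∈ I) (hneg : ∀ x ∈ I, -x ∈ I)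
    (habs : ∀ u ∈ DA, ∀ x ∈ I, u * x ∈ I ∧ x * u ∈ I)
    (hnz : ∃ x ∈ I, x ≠ 0)
    -- `I₀ = I ∩ R`, as a set of elements of `R`:
    (I₀ : Set R) (hI₀ : I₀ = {r : R | Algebra.lmul K R r ∈ I}) :
    -- `I₀` is a nonzero ideal of `R`:
    (∃ J : Ideal R, (J : Set R) = I₀ ∧ J ≠ ⊥) ∧
    -- `I₀` is `Der_K(R)`-stable:
    (∀ δ : Module.End K R, (∀ x y : R, δ (x * y) = δ x * y + x * δ y) →
      ∀ r ∈ I₀, δ r ∈ I₀) ∧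
    -- `D(R)·I₀·D(R) ∩ R = I₀`:
    {r : R | Algebra.lmul K R r ∈ (AddSubgroup.closure
      {x : Module.End K R | ∃ u ∈ DA, ∃ r ∈ I₀, ∃ v ∈ DA, x = u * Algebra.lmul K R r * v} :
        AddSubgroup (Module.End K R))} = I₀ := by
  subst hI₀
  -- multiplication operators belong to `DA`
  have hlmul_DA : ∀ r : R, Algebra.lmul K R r ∈ DA := by
    intro r
    rw [hDA]
    exact Set.mem_iUnion.2 ⟨0, lmul_mem_DO0 r⟩
  have hone_DA : (1 : Module.End K R) ∈ DA := by
    rw [hDA]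
    exact Set.mem_iUnion.2 ⟨0, one_mem_DO0⟩
  -- I is closed under subtraction
  have hsub : ∀ x ∈ I, ∀ y ∈ I, x - y ∈ I := fun x hx y hy => by
    rw [sub_eq_add_neg]; exact hadd x hx (-y) (hneg y hy)
  -- base case: a nonzero element of I ∩ DO 0 yields a nonzero element of I₀
  have base : ∀ x ∈ DO K R 0, x ∈ I → x ≠ 0 →
      ∃ r : R, Algebra.lmul K R r ∈ I ∧ r ≠ 0 := by
    intro x hx hxI hne
    have hxeq : x = Algebra.lmul K R (x 1) := by
      ext y
      have h := congrArg (fun f : Module.End K R => f 1) (hx y)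
      simp only [Module.End.mul_apply, Algebra.coe_lmul_eq_mul, LinearMap.mul_apply'] at h ⊢
      rw [mul_comm]
      simpa using h.symm
    refine ⟨x 1, by rwa [← hxeq], fun hz => hne ?_⟩
    rw [hxeq, hz, map_zero]
  -- induction: any nonzero element of I yields a nonzero element of I₀
  have key : ∀ i : ℕ, ∀ x ∈ DO K R i, x ∈ I → x ≠ 0 →
      ∃ r : R, Algebra.lmul K R r ∈ I ∧ r ≠ 0 := by
    intro i
    induction i with
    | zero => exact base
    | succ i ih =>
      intro x hx hxI hne
      by_cases hc : ∀ r : R, Algebra.lmul K R r * x = x * Algebra.lmul K R r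
      · exact base x hc hxI hne
      · push_neg at hc
        obtain ⟨r, hr⟩ := hc
        set c := Algebra.lmul K R r * x - x * Algebra.lmul K R r with hcdef
        have hcDO : c ∈ DO K R i := hx r
        have hcI : c ∈ I :=
          hsub _ (habs _ (hlmul_DA r) x hxI).1 _ (habs _ (hlmul_DA r) x hxI).2
        have hcne : c ≠ 0 := sub_ne_zero_of_ne hr
        exact ih c hcDO hcI hcne
  refine ⟨?_, ?_, ?_⟩
  · -- I₀ is a nonzero ideal
    refine ⟨{ carrier := {r : R | Algebra.lmul K R r ∈ I}
              add_mem' := fun {a b} ha hb => by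
                simp only [Set.mem_setOf_eq, map_add] at *
                exact hadd _ ha _ hb
              zero_mem' := by
                simp only [Set.mem_setOf_eq, map_zero]
                exact h0
              smul_mem' := fun c x hx => by
                simp only [Set.mem_setOf_eq, smul_eq_mul, map_mul] at *
                exact (habs _ (hlmul_DA c) _ hx).1 }, rfl, ?_⟩
    rw [Submodule.ne_bot_iff]
    obtain ⟨x, hxI, hxne⟩ := hnz
    have := h_sub hxI
    rw [hDA] at this
    obtain ⟨i, hi⟩ := Set.mem_iUnion.1 this
    obtain ⟨r, hrI, hrne⟩ := key i x hi hxI hxne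
    exact ⟨r, hrI, hrne⟩
  · -- Der-stability
    intro δ hδ r hr
    -- δ ∈ DO 1 ⊆ DA
    have hδDA : δ ∈ DA := by
      rw [hDA]
      refine Set.mem_iUnion.2 ⟨1, ?_⟩
      intro s
      have : Algebra.lmul K R s * δ - δ * Algebra.lmul K R s
          = Algebra.lmul K R (-δ s) := by
        ext y
        simp only [LinearMap.sub_apply, Module.End.mul_apply, Algebra.coe_lmul_eq_mul, LinearMap.mul_apply', hδ]
        ring
      rw [this]
      exact lmul_mem_DO0 _
    -- [δ, lmul r] = lmul (δ r)
    have hcomm : δ * Algebra.lmul K R r - Algebra.lmul K R r * δ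
        = Algebra.lmul K R (δ r) := by
      ext y
      simp only [LinearMap.sub_apply, Module.End.mul_apply, Algebra.coe_lmul_eq_mul, LinearMap.mul_apply', hδ]
      ring
    have h1 : δ * Algebra.lmul K R r ∈ I := (habs δ hδDA _ hr).1
    have h2 : Algebra.lmul K R r * δ ∈ I := (habs δ hδDA _ hr).2
    have := hsub _ h1 _ h2
    rwa [hcomm] at this
  · -- D·I₀·D ∩ R = I₀
    ext r
    simp only [Set.mem_setOf_eq]
    constructor
    · intro hr
      -- the closure is contained in I
      let G : AddSubgroup (Module.End K R) :=
        { carrier := I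
          add_mem' := fun {a b} ha hb => hadd a ha b hb
          zero_mem' := h0
          neg_mem' := fun {a} ha => hneg a ha }
      have hle : AddSubgroup.closure
          {x : Module.End K R | ∃ u ∈ DA, ∃ r ∈ {r : R | Algebra.lmul K R r ∈ I},
            ∃ v ∈ DA, x = u * Algebra.lmul K R r * v} ≤ G := by
        rw [AddSubgroup.closure_le]
        rintro x ⟨u, hu, s, hs, v, hv, rfl⟩
        exact (habs v hv _ (habs u hu _ hs).1).2
      exact hle hr
    · intro hr
      apply AddSubgroup.subset_closure
      exact ⟨1, hone_DA, r, hr, 1, hone_DA, by rw [one_mul, mul_one]⟩
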